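/- arXiv:1111.1229 — 4 statements merged into one kernel-verified Lean document; each statement's English description precedes it below -/
import Mathlib

section
/- Suppose c ≠ 0 and let n₀ be the smallest index n with c_n ≠ 0. Define v(t) = Σ_{n≥1} exp(−λ_n t + ∫_0^t α(r(s)) ds) c_n e_n for t ≥ 0. Then lim_{t→∞} (1/t) log ‖v(t)‖ = −(λ_{n₀} − Σ_{j=1}^N π_j α_j). In particular, ‖v(t)‖ converges exponentially to zero if and only if λ_{n₀} − Σ_{j=1}^N π_j α_j > 0. -/
/-!
By Parseval, `‖v t‖² = exp (2 ∫₀ᵗ α (r s) ds) * ∑ₙ exp (-2 λₙ t) cₙ²`. Splitting the integral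
along the occupation times of `r` gives the first factor the exponential rate `2 ∑ⱼ πⱼ αⱼ`.
In the series, monotonicity of `λ` makes the term `n₀` dominant: the series is at least
`exp (-2 λ_{n₀} t) c_{n₀}²` and, for `t ≥ 1`, at most `exp (-2 λ_{n₀} (t - 1))` times its value
at `t = 1`, so its rate is `-2 λ_{n₀}`. Finally, a positive function decays exponentially
exactly when its Lyapunov exponent is negative.
-/

open Filter Topology
open scoped lp

theorem HilbertBasis.norm_tsum_smul_sq {ι H : Type*} [NormedAddCommGroup H]
    [InnerProductSpace ℝ H] (b : HilbertBasis ι ℝ H) {f : ι → ℝ}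
    (hf : Summable fun i => f i ^ 2) :
    ‖∑' i, f i • b i‖ ^ 2 = ∑' i, f i ^ 2 := by
  have hf2 : Memℓp f 2 := memℓp_gen (by simpa [Real.norm_eq_abs, sq_abs] using hf)
  let F : ℓ²(ι, ℝ) := ⟨f, hf2⟩
  rw [(b.hasSum_repr_symm F).tsum_eq, b.repr.symm.norm_map, ← real_inner_self_eq_norm_sq,
    lp.inner_eq_tsum]
  simp [F, sq]

theorem HilbertBasis.norm_tsum_exp_mul_smul_sq {ι H : Type*} [NormedAddCommGroup H]
    [InnerProductSpace ℝ H] (b : HilbertBasis ι ℝ H) {lam c : ι → ℝ} {t a : ℝ}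
    (hs : Summable fun i => Real.exp (-(2 * lam i) * t) * c i ^ 2) :
    ‖∑' i, (Real.exp (-lam i * t + a) * c i) • b i‖ ^ 2
      = Real.exp (2 * a) * ∑' i, Real.exp (-(2 * lam i) * t) * c i ^ 2 := by
  have hcoeff_sq (i : ι) : (Real.exp (-lam i * t + a) * c i) ^ 2
      = Real.exp (2 * a) * (Real.exp (-(2 * lam i) * t) * c i ^ 2) := by
    rw [mul_pow, ← Real.exp_nat_mul, ← mul_assoc, ← Real.exp_add]
    ring_nf
  rw [b.norm_tsum_smul_sq (by simpa only [hcoeff_sq] using hs.mul_left _)]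
  simp only [hcoeff_sq, tsum_mul_left]

theorem intervalIntegral_comp_eq_sum_mul_occupation {ι : Type*} [Fintype ι] [DecidableEq ι]
    [MeasurableSpace ι] [MeasurableSingletonClass ι] {r : ℝ → ι} (hr : Measurable r)
    (α : ι → ℝ) (t : ℝ) :
    ∫ s in (0:ℝ)..t, α (r s) = ∑ i, α i * ∫ s in (0:ℝ)..t, (if r s = i then (1:ℝ) else 0) := by
  have hint (i : ι) : IntervalIntegrable (fun s => if r s = i then (1:ℝ) else 0)
      MeasureTheory.volume 0 t :=
    (intervalIntegrable_const (c := (1:ℝ))).mono_fun'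
      ((measurable_const.ite (hr (MeasurableSet.singleton i)) measurable_const).aestronglyMeasurable)
      (Eventually.of_forall fun s => by dsimp only; split <;> simp)
  simp_rw [← intervalIntegral.integral_const_mul]
  rw [← intervalIntegral.integral_finsetSum fun i _ => (hint i).const_mul (α i)]
  simp

theorem tendsto_time_average_of_occupation {ι : Type*} [Fintype ι] [DecidableEq ι]
    [MeasurableSpace ι] [MeasurableSingletonClass ι] {r : ℝ → ι} (hr : Measurable r)
    (α : ι → ℝ) {p : ι → ℝ}
    (hocc : ∀ i, Tendsto
      (fun t : ℝ => (1 / t) * ∫ s in (0:ℝ)..t, (if r s = i then (1:ℝ) else 0))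
      atTop (𝓝 (p i))) :
    Tendsto (fun t : ℝ => (1 / t) * ∫ s in (0:ℝ)..t, α (r s)) atTop (𝓝 (∑ i, p i * α i)) := by
  simp_rw [intervalIntegral_comp_eq_sum_mul_occupation hr, Finset.mul_sum, mul_left_comm _ (α _),
    mul_comm (p _)]
  exact tendsto_finsetSum _ fun i _ => (hocc i).const_mul (α i)

theorem tendsto_inv_mul_of_bounded_sub_mul {g : ℝ → ℝ} {ℓ D K : ℝ}
    (hlow : ∀ᶠ t in atTop, ℓ * t + D ≤ g t) (hup : ∀ᶠ t in atTop, g t ≤ ℓ * t + K) :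
    Tendsto (fun t => (1 / t) * g t) atTop (𝓝 ℓ) := by
  have affine (E : ℝ) : Tendsto (fun t : ℝ => (1 / t) * (ℓ * t + E)) atTop (𝓝 ℓ) := by
    have : Tendsto (fun t : ℝ => ℓ + E / t) atTop (𝓝 ℓ) := by
      simpa using (tendsto_const_nhds (x := ℓ)).add
        ((tendsto_const_nhds (x := E)).div_atTop tendsto_id)
    refine this.congr' ?_
    filter_upwards [eventually_gt_atTop 0] with t ht
    field_simp
  refine tendsto_of_tendsto_of_tendsto_of_le_of_le' (affine D) (affine K) ?_ ?_
  · filter_upwards [hlow, eventually_gt_atTop 0] with t h ht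
    exact mul_le_mul_of_nonneg_left h (by positivity)
  · filter_upwards [hup, eventually_gt_atTop 0] with t h ht
    exact mul_le_mul_of_nonneg_left h (by positivity)

section ExpWeightedSum

variable {lam w : ℕ → ℝ}

theorem summable_exp_mul_of_monotone (hlam : Monotone lam) (hw0 : ∀ n, 0 ≤ w n)
    (hw : Summable w) {t : ℝ} (ht : 0 ≤ t) :
    Summable fun n => Real.exp (-lam n * t) * w n :=
  Summable.of_nonneg_of_le (fun n => by have := hw0 n; positivity)
    (fun n => mul_le_mul_of_nonneg_right
      (Real.exp_le_exp.mpr (by nlinarith [hlam (Nat.zero_le n)])) (hw0 n))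
    (hw.mul_left (Real.exp (-lam 0 * t)))

theorem tendsto_log_tsum_exp_mul (hlam : Monotone lam) (hw0 : ∀ n, 0 ≤ w n)
    (hw : Summable w) {n₀ : ℕ} (hn₀ : w n₀ ≠ 0) (hn₀min : ∀ m < n₀, w m = 0) :
    Tendsto (fun t : ℝ => (1 / t) * Real.log (∑' n, Real.exp (-lam n * t) * w n)) atTop
      (𝓝 (-lam n₀)) := by
  set S : ℝ → ℝ := fun t => ∑' n, Real.exp (-lam n * t) * w n
  have hsum {t : ℝ} (ht : 0 ≤ t) := summable_exp_mul_of_monotone hlam hw0 hw ht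
  have hpos {t : ℝ} (ht : 0 ≤ t) : 0 < S t :=
    (hsum ht).tsum_pos (fun n => by have := hw0 n; positivity) n₀
      (mul_pos (Real.exp_pos _) ((hw0 n₀).lt_of_ne' hn₀))
  refine tendsto_inv_mul_of_bounded_sub_mul (D := Real.log (w n₀))
    (K := lam n₀ + Real.log (S 1)) ?_ ?_
  · filter_upwards [eventually_ge_atTop 0] with t ht
    have hle : Real.exp (-lam n₀ * t) * w n₀ ≤ S t :=
      (hsum ht).le_tsum n₀ fun n _ => by have := hw0 n; positivity
    have := Real.log_le_log (mul_pos (Real.exp_pos _) ((hw0 n₀).lt_of_ne' hn₀)) hle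
    rwa [Real.log_mul (Real.exp_ne_zero _) hn₀, Real.log_exp] at this
  · filter_upwards [eventually_ge_atTop 1] with t ht
    have hterm (n : ℕ) : Real.exp (-lam n * t) * w n
        ≤ Real.exp (-lam n₀ * (t - 1)) * (Real.exp (-lam n * 1) * w n) := by
      rcases lt_or_ge n n₀ with h | h
      · simp [hn₀min n h]
      · rw [← mul_assoc, ← Real.exp_add]
        refine mul_le_mul_of_nonneg_right (Real.exp_le_exp.mpr ?_) (hw0 n)
        nlinarith [hlam h]
    have hle : S t ≤ Real.exp (-lam n₀ * (t - 1)) * S 1 := by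
      rw [← tsum_mul_left]
      exact (hsum (by linarith)).tsum_le_tsum hterm ((hsum zero_le_one).mul_left _)
    have := Real.log_le_log (hpos (by linarith)) hle
    rw [Real.log_mul (Real.exp_ne_zero _) (hpos zero_le_one).ne', Real.log_exp] at this
    linarith

end ExpWeightedSum

theorem exists_exp_decay_iff_of_tendsto_log {f : ℝ → ℝ} {ℓ : ℝ}
    (hpos : ∀ᶠ t in atTop, 0 < f t)
    (hf : Tendsto (fun t => (1 / t) * Real.log (f t)) atTop (𝓝 ℓ)) :
    (∃ γ > (0:ℝ), ∃ C : ℝ, ∀ᶠ t in atTop, f t ≤ C * Real.exp (-γ * t)) ↔ ℓ < 0 := by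
  constructor
  · rintro ⟨γ, hγ, C, hC⟩
    obtain ⟨t₁, hft₁, hCt₁⟩ := (hpos.and hC).exists
    have hC0 : 0 < C := pos_of_mul_pos_left (hft₁.trans_le hCt₁) (Real.exp_pos _).le
    have hbound : ∀ᶠ t in atTop, Real.log (f t) ≤ -γ * t + Real.log C := by
      filter_upwards [hpos, hC] with t hft hCt
      have := Real.log_le_log hft hCt
      rwa [Real.log_mul hC0.ne' (Real.exp_ne_zero _), Real.log_exp, add_comm] at this
    have hlim := tendsto_inv_mul_of_bounded_sub_mul (g := fun t => -γ * t + Real.log C)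
      (D := Real.log C) (K := Real.log C) (.of_forall fun _ => le_rfl) (.of_forall fun _ => le_rfl)
    have := le_of_tendsto_of_tendsto hf hlim <| by
      filter_upwards [hbound, eventually_gt_atTop 0] with t h ht
      exact mul_le_mul_of_nonneg_left h (by positivity)
    linarith
  · intro hℓ
    refine ⟨-ℓ / 2, by linarith, 1, ?_⟩
    filter_upwards [hf.eventually_lt_const (by linarith : ℓ < ℓ / 2), hpos,
      eventually_gt_atTop 0] with t hlt hft ht
    have hlog : Real.log (f t) < ℓ / 2 * t := by
      rwa [one_div, inv_mul_lt_iff₀ ht, mul_comm] at hlt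
    calc f t = Real.exp (Real.log (f t)) := (Real.exp_log hft).symm
      _ ≤ 1 * Real.exp (-(-ℓ / 2) * t) := by
        rw [one_mul, neg_div, neg_neg]; exact Real.exp_le_exp.mpr hlog.le

theorem sample_lyapunov_exponent_deterministic_part_general
    {H : Type*} [NormedAddCommGroup H] [InnerProductSpace ℝ H] [CompleteSpace H]
    (b : HilbertBasis ℕ ℝ H)
    (lam : ℕ → ℝ) (hlam : Monotone lam)
    (c : ℕ → ℝ) (hc : Summable (fun n => c n ^ 2))
    (n₀ : ℕ) (hn₀ : c n₀ ≠ 0) (hn₀min : ∀ m, m < n₀ → c m = 0)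
    {N : ℕ} (r : ℝ → Fin N) (hr : Measurable r)
    (α : Fin N → ℝ)
    (pp : Fin N → ℝ)
    (hocc : ∀ i, Tendsto
      (fun t : ℝ => (1 / t) * ∫ s in (0:ℝ)..t, (if r s = i then (1:ℝ) else 0))
      atTop (nhds (pp i)))
    (v : ℝ → H)
    (hv : ∀ t : ℝ, v t =
      ∑' n : ℕ, (Real.exp (-lam n * t + ∫ s in (0:ℝ)..t, α (r s)) * c n) • (b n : H)) :
    Tendsto (fun t : ℝ => (1 / t) * Real.log ‖v t‖) atTop
        (nhds (-(lam n₀ - ∑ j, pp j * α j))) ∧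
    ((∃ γ > (0:ℝ), ∃ C : ℝ, ∀ᶠ t in atTop, ‖v t‖ ≤ C * Real.exp (-γ * t)) ↔
      0 < lam n₀ - ∑ j, pp j * α j) := by
  set A : ℝ → ℝ := fun t => ∫ s in (0:ℝ)..t, α (r s)
  set S : ℝ → ℝ := fun t => ∑' n, Real.exp (-(2 * lam n) * t) * c n ^ 2
  have hlam2 : Monotone fun n => 2 * lam n := hlam.const_mul zero_le_two
  have hS_summable {t : ℝ} (ht : 0 ≤ t) :=
    summable_exp_mul_of_monotone hlam2 (fun n => sq_nonneg (c n)) hc ht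
  have hnorm_sq {t : ℝ} (ht : 0 ≤ t) : ‖v t‖ ^ 2 = Real.exp (2 * A t) * S t := by
    rw [hv]
    exact b.norm_tsum_exp_mul_smul_sq (hS_summable ht)
  have hSpos {t : ℝ} (ht : 0 ≤ t) : 0 < S t :=
    (hS_summable ht).tsum_pos (fun n => by positivity) n₀ (by positivity)
  have hlog {t : ℝ} (ht : 0 ≤ t) : Real.log ‖v t‖ = A t + Real.log (S t) / 2 := by
    have := congrArg Real.log (hnorm_sq ht)
    rw [Real.log_pow, Real.log_mul (Real.exp_ne_zero _) (hSpos ht).ne', Real.log_exp] at this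
    push_cast at this
    linarith
  have hlimit : Tendsto (fun t : ℝ => (1 / t) * Real.log ‖v t‖) atTop
      (nhds (-(lam n₀ - ∑ j, pp j * α j))) := by
    have hS_lim := tendsto_log_tsum_exp_mul hlam2 (fun n => sq_nonneg (c n)) hc
      (pow_ne_zero 2 hn₀) fun m hm => by simp [hn₀min m hm]
    rw [show -(lam n₀ - ∑ j, pp j * α j) = ∑ j, pp j * α j + -(2 * lam n₀) / 2 by ring]
    refine ((tendsto_time_average_of_occupation hr α hocc).add (hS_lim.div_const 2)).congr' ?_
    filter_upwards [eventually_ge_atTop 0] with t ht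
    rw [hlog ht]
    ring
  refine ⟨hlimit, (exists_exp_decay_iff_of_tendsto_log ?_ hlimit).trans neg_neg_iff_pos⟩
  filter_upwards [eventually_ge_atTop 0] with t ht
  exact lt_of_pow_lt_pow_left₀ 2 (norm_nonneg _)
    (by rw [zero_pow two_ne_zero, hnorm_sq ht]; exact mul_pos (Real.exp_pos _) (hSpos ht))

/-- sample Lyapunov exponent of
`v(t) = Σ_n exp(−λ_n t + ∫_0^t α(r(s)) ds) c_n e_n`:
`(1/t) log ‖v(t)‖ → −(λ_{n₀} − Σ_j π_j α_j)`, and `‖v(t)‖` converges exponentially to zero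
iff `λ_{n₀} − Σ_j π_j α_j > 0`. -/
theorem sample_lyapunov_exponent_deterministic_part
    {H : Type*} [NormedAddCommGroup H] [InnerProductSpace ℝ H] [CompleteSpace H]
    (b : HilbertBasis ℕ ℝ H)
    (lam : ℕ → ℝ) (hlam : Monotone lam)
    (c : ℕ → ℝ) (hc : Summable (fun n => c n ^ 2)) (hc0 : c ≠ 0)
    (n₀ : ℕ) (hn₀ : c n₀ ≠ 0) (hn₀min : ∀ m, m < n₀ → c m = 0)
    {N : ℕ} (r : ℝ → Fin N) (hr : Measurable r)
    (α : Fin N → ℝ)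
    (pp : Fin N → ℝ) (hpp : ∀ i, 0 ≤ pp i) (hppsum : ∑ i, pp i = 1)
    (hocc : ∀ i, Tendsto
      (fun t : ℝ => (1 / t) * ∫ s in (0:ℝ)..t, (if r s = i then (1:ℝ) else 0))
      atTop (nhds (pp i)))
    (v : ℝ → H)
    (hv : ∀ t : ℝ, v t =
      ∑' n : ℕ, (Real.exp (-lam n * t + ∫ s in (0:ℝ)..t, α (r s)) * c n) • (b n : H)) :
    Tendsto (fun t : ℝ => (1 / t) * Real.log ‖v t‖) atTop
        (nhds (-(lam n₀ - ∑ j, pp j * α j))) ∧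
    ((∃ γ > (0:ℝ), ∃ C : ℝ, ∀ᶠ t in atTop, ‖v t‖ ≤ C * Real.exp (-γ * t)) ↔
      0 < lam n₀ - ∑ j, pp j * α j) :=
  sample_lyapunov_exponent_deterministic_part_general b lam hlam c hc n₀ hn₀ hn₀min r hr α pp hocc v
    hv
end

section
/- Suppose c ≠ 0 and define v(t) = Σ_{n≥1} exp(−λ_n t + ∫_0^t α(r(s)) ds) c_n e_n for t ≥ 0. Then limsup_{t→∞} (1/t) log ‖v(t)‖ ≤ −(λ_1 − Σ_{j=1}^N π_j α_j), where λ_1 is the first (smallest) term of the nondecreasing sequence λ. In particular, ‖v(t)‖ converges exponentially to zero whenever λ_1 − Σ_{j=1}^N π_j α_j > 0. -/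
open Filter
open scoped BigOperators

open MeasureTheory
open scoped ENNReal

-- occupation limit lemma
lemma occ_tendsto {N : ℕ} (r : ℝ → Fin N) (hr : Measurable r) (α : Fin N → ℝ)
    (pp : Fin N → ℝ)
    (hocc : ∀ i, Tendsto
      (fun t : ℝ => (1 / t) * ∫ s in (0:ℝ)..t, (if r s = i then (1:ℝ) else 0))
      atTop (nhds (pp i))) :
    Tendsto (fun t : ℝ => (1 / t) * ∫ s in (0:ℝ)..t, α (r s)) atTop
      (nhds (∑ j, pp j * α j)) := by
  have hint : ∀ (i : Fin N) (t : ℝ),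
      IntervalIntegrable (fun s => if r s = i then (1:ℝ) else 0) volume 0 t := by
    intro i t
    refine (intervalIntegrable_const (c := (1:ℝ))).mono_fun ?_ ?_
    · exact (Measurable.ite (hr (measurableSet_singleton i)) measurable_const
        measurable_const).aestronglyMeasurable.restrict
    · refine Filter.Eventually.of_forall fun s => ?_
      simp only [Real.norm_eq_abs]
      split <;> simp
  have hEq : ∀ t : ℝ, (∫ s in (0:ℝ)..t, α (r s)) =
      ∑ i, α i * ∫ s in (0:ℝ)..t, (if r s = i then (1:ℝ) else 0) := by
    intro t
    have h1 : ∀ s : ℝ, α (r s) = ∑ i, (if r s = i then (1:ℝ) else 0) * α i := by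
      intro s
      simp [ite_mul, Finset.sum_ite_eq]
    calc (∫ s in (0:ℝ)..t, α (r s))
        = ∫ s in (0:ℝ)..t, ∑ i, (if r s = i then (1:ℝ) else 0) * α i := by
          simp_rw [← h1]
      _ = ∑ i, ∫ s in (0:ℝ)..t, (if r s = i then (1:ℝ) else 0) * α i := by
          exact intervalIntegral.integral_finset_sum fun i _ => (hint i t).mul_const _
      _ = ∑ i, α i * ∫ s in (0:ℝ)..t, (if r s = i then (1:ℝ) else 0) := by
          refine Finset.sum_congr rfl fun i _ => ?_
          rw [intervalIntegral.integral_mul_const, mul_comm]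
  have : Tendsto (fun t : ℝ => ∑ i, α i *
      ((1 / t) * ∫ s in (0:ℝ)..t, (if r s = i then (1:ℝ) else 0))) atTop
      (nhds (∑ j, pp j * α j)) := by
    have := tendsto_finset_sum (Finset.univ : Finset (Fin N))
      (fun i _ => ((hocc i).const_mul (α i)))
    simpa [mul_comm] using this
  refine this.congr fun t => ?_
  rw [hEq, Finset.mul_sum]
  refine Finset.sum_congr rfl fun i _ => by ring


-- norm identity lemma
lemma norm_tsum_smul {H : Type*} [NormedAddCommGroup H] [InnerProductSpace ℝ H] [CompleteSpace H]
    (b : HilbertBasis ℕ ℝ H) (f : ℕ → ℝ) (hf : Summable (fun n => f n ^ 2)) :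
    ‖∑' n : ℕ, f n • (b n : H)‖ ^ 2 = ∑' n, f n ^ 2 ∧
      (f ≠ 0 → ∑' n : ℕ, f n • (b n : H) ≠ 0) := by
  have hmem : Memℓp f 2 := by
    apply memℓp_gen
    have : (fun n => ‖f n‖ ^ (2:ℝ≥0∞).toReal) = fun n => f n ^ 2 := by
      funext n
      rw [ENNReal.toReal_ofNat, Real.rpow_two, Real.norm_eq_abs, sq_abs]
    rw [this]; exact hf
  set F : lp (fun _ : ℕ => ℝ) 2 := ⟨f, hmem⟩ with hF
  have hcoe : ∀ n, F n = f n := fun n => rfl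
  have hvF : (∑' n : ℕ, f n • (b n : H)) = b.repr.symm F := by
    have := (b.hasSum_repr_symm F).tsum_eq
    simpa [hcoe] using this
  constructor
  · rw [hvF, LinearIsometryEquiv.norm_map]
    have h2 : (0:ℝ) < (2:ℝ≥0∞).toReal := by simp
    have h := lp.norm_rpow_eq_tsum h2 F
    simp only [ENNReal.toReal_ofNat, Real.rpow_two, Real.norm_eq_abs, sq_abs] at h
    exact h
  · intro hf0 h
    apply hf0
    rw [hvF] at h
    have : F = 0 := b.repr.symm.injective (by simpa using h)
    funext n
    have := congrArg (fun (g : lp (fun _ : ℕ => ℝ) 2) => g n) this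
    simpa [hcoe] using this

/-- for any square-summable `c ≠ 0`,
`limsup_{t→∞} (1/t) log ‖v(t)‖ ≤ −(λ_1 − Σ_j π_j α_j)` (here `λ_1 = lam 0` is the first term
of the nondecreasing sequence), and `‖v(t)‖` converges exponentially to zero whenever
`λ_1 − Σ_j π_j α_j > 0`. -/
theorem sample_lyapunov_upper_bound_deterministic_part
    {H : Type*} [NormedAddCommGroup H] [InnerProductSpace ℝ H] [CompleteSpace H]
    (b : HilbertBasis ℕ ℝ H)
    (lam : ℕ → ℝ) (hlam : Monotone lam)
    (c : ℕ → ℝ) (hc : Summable (fun n => c n ^ 2)) (hc0 : c ≠ 0)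
    {N : ℕ} (r : ℝ → Fin N) (hr : Measurable r)
    (α : Fin N → ℝ)
    (pp : Fin N → ℝ) (hpp : ∀ i, 0 ≤ pp i) (hppsum : ∑ i, pp i = 1)
    (hocc : ∀ i, Tendsto
      (fun t : ℝ => (1 / t) * ∫ s in (0:ℝ)..t, (if r s = i then (1:ℝ) else 0))
      atTop (nhds (pp i)))
    (v : ℝ → H)
    (hv : ∀ t : ℝ, v t =
      ∑' n : ℕ, (Real.exp (-lam n * t + ∫ s in (0:ℝ)..t, α (r s)) * c n) • (b n : H)) :
    limsup (fun t : ℝ => (1 / t) * Real.log ‖v t‖) atTop ≤ -(lam 0 - ∑ j, pp j * α j) ∧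
    (0 < lam 0 - ∑ j, pp j * α j →
      ∃ γ > (0:ℝ), ∃ C : ℝ, ∀ᶠ t in atTop, ‖v t‖ ≤ C * Real.exp (-γ * t)) := by
  set A := ∑ j, pp j * α j with hA
  set K : ℝ → ℝ := fun t => ∫ s in (0:ℝ)..t, α (r s) with hKdef
  have hK : Tendsto (fun t : ℝ => (1 / t) * K t) atTop (nhds A) :=
    occ_tendsto r hr α pp hocc
  obtain ⟨n0, hn0⟩ : ∃ n, c n ≠ 0 := Function.ne_iff.1 hc0
  set Cc2 := ∑' n, c n ^ 2 with hCc2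
  have hCc2pos : 0 < Cc2 := by
    have h1 : 0 < c n0 ^ 2 := by positivity
    exact lt_of_lt_of_le h1 (Summable.le_tsum hc n0 fun m _ => sq_nonneg _)
  set Cc := Real.sqrt Cc2 with hCcdef
  have hCc : 0 < Cc := Real.sqrt_pos.2 hCc2pos
  -- key pointwise bound
  have hb : ∀ t : ℝ, 0 ≤ t →
      (0 < ‖v t‖ ∧ ‖v t‖ ≤ Real.exp (-lam 0 * t + K t) * Cc) ∧
      Real.exp (-lam n0 * t + K t) * |c n0| ≤ ‖v t‖ := by
    intro t ht
    set f : ℕ → ℝ := fun n => Real.exp (-lam n * t + K t) * c n with hfdef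
    have hle : ∀ n, f n ^ 2 ≤ Real.exp (-lam 0 * t + K t) ^ 2 * c n ^ 2 := by
      intro n
      have hexp : Real.exp (-lam n * t + K t) ≤ Real.exp (-lam 0 * t + K t) := by
        apply Real.exp_le_exp.2
        have : lam 0 ≤ lam n := hlam (Nat.zero_le n)
        nlinarith
      have : f n ^ 2 = Real.exp (-lam n * t + K t) ^ 2 * c n ^ 2 := by
        rw [hfdef]; ring
      rw [this]
      exact mul_le_mul_of_nonneg_right
        (pow_le_pow_left₀ (Real.exp_nonneg _) hexp 2) (sq_nonneg _)
    have hfs : Summable (fun n => f n ^ 2) :=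
      Summable.of_nonneg_of_le (fun n => sq_nonneg _) hle (hc.mul_left _)
    obtain ⟨hnorm, hne⟩ := norm_tsum_smul b f hfs
    have hveq : v t = ∑' n : ℕ, f n • (b n : H) := hv t
    have hf0 : f ≠ 0 := by
      intro h
      have := congrFun h n0
      simp only [hfdef, Pi.zero_apply] at this
      exact hn0 (by
        rcases mul_eq_zero.1 this with h' | h'
        · exact absurd h' (Real.exp_ne_zero _)
        · exact h')
    have hpos : 0 < ‖v t‖ := by
      rw [hveq]; exact norm_pos_iff.2 (hne hf0)
    refine ⟨⟨hpos, ?_⟩, ?_⟩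
    swap
    · have hlow : (Real.exp (-lam n0 * t + K t) * |c n0|) ^ 2 ≤ ‖v t‖ ^ 2 := by
        rw [hveq, hnorm]
        have h1 : f n0 ^ 2 ≤ ∑' n, f n ^ 2 := Summable.le_tsum hfs n0 fun m _ => sq_nonneg _
        have h2 : (Real.exp (-lam n0 * t + K t) * |c n0|) ^ 2 = f n0 ^ 2 := by
          rw [hfdef, mul_pow, mul_pow, sq_abs]
        rwa [h2]
      have := Real.sqrt_le_sqrt hlow
      rwa [Real.sqrt_sq (norm_nonneg _), Real.sqrt_sq (by positivity)] at this
    have hsq : ‖v t‖ ^ 2 ≤ (Real.exp (-lam 0 * t + K t) * Cc) ^ 2 := by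
      rw [hveq, hnorm]
      have h1 : ∑' n, f n ^ 2 ≤ ∑' n, Real.exp (-lam 0 * t + K t) ^ 2 * c n ^ 2 :=
        Summable.tsum_le_tsum hle hfs (hc.mul_left _)
      have h2 : ∑' n, Real.exp (-lam 0 * t + K t) ^ 2 * c n ^ 2
          = Real.exp (-lam 0 * t + K t) ^ 2 * Cc2 := tsum_mul_left
      have h3 : (Real.exp (-lam 0 * t + K t) * Cc) ^ 2
          = Real.exp (-lam 0 * t + K t) ^ 2 * Cc2 := by
        rw [mul_pow, hCcdef, Real.sq_sqrt hCc2pos.le]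
      rw [h3]; exact h1.trans_eq h2
    have := Real.sqrt_le_sqrt hsq
    rwa [Real.sqrt_sq (norm_nonneg _), Real.sqrt_sq (by positivity)] at this
  -- the asymptotic comparison function
  set g : ℝ → ℝ := fun t => -lam 0 + (1 / t) * K t + Real.log Cc / t with hgdef
  have hlogCc : Tendsto (fun t : ℝ => Real.log Cc / t) atTop (nhds 0) :=
    tendsto_const_nhds.div_atTop tendsto_id
  have hg : Tendsto g atTop (nhds (-lam 0 + A + 0)) :=
    (tendsto_const_nhds.add hK).add hlogCc
  have hle2 : ∀ᶠ t in atTop,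
      (1 / t) * Real.log ‖v t‖ ≤ g t := by
    filter_upwards [eventually_gt_atTop (0:ℝ)] with t ht
    obtain ⟨⟨hp, hb'⟩, -⟩ := hb t ht.le
    have hlog : Real.log ‖v t‖ ≤ -lam 0 * t + K t + Real.log Cc := by
      calc Real.log ‖v t‖ ≤ Real.log (Real.exp (-lam 0 * t + K t) * Cc) :=
            Real.log_le_log hp hb'
        _ = -lam 0 * t + K t + Real.log Cc := by
            rw [Real.log_mul (Real.exp_ne_zero _) (ne_of_gt hCc), Real.log_exp]
    have ht' : t ≠ 0 := ne_of_gt ht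
    calc (1 / t) * Real.log ‖v t‖
        ≤ (1 / t) * (-lam 0 * t + K t + Real.log Cc) :=
          mul_le_mul_of_nonneg_left hlog (by positivity)
      _ = g t := by rw [hgdef]; field_simp
  constructor
  · have hgb : IsBoundedUnder (· ≤ ·) atTop g := hg.isBoundedUnder_le
    set h : ℝ → ℝ := fun t => -lam n0 + (1 / t) * K t + Real.log |c n0| / t with hhdef
    have hhT : Tendsto h atTop (nhds (-lam n0 + A + 0)) :=
      (tendsto_const_nhds.add hK).add (tendsto_const_nhds.div_atTop tendsto_id)
    have hlow : ∀ᶠ t in atTop, h t ≤ (1 / t) * Real.log ‖v t‖ := by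
      filter_upwards [eventually_gt_atTop (0:ℝ)] with t ht
      obtain ⟨⟨hp, -⟩, hlb⟩ := hb t ht.le
      have hcn0 : (0:ℝ) < |c n0| := abs_pos.2 hn0
      have hlog : -lam n0 * t + K t + Real.log |c n0| ≤ Real.log ‖v t‖ := by
        calc -lam n0 * t + K t + Real.log |c n0|
            = Real.log (Real.exp (-lam n0 * t + K t) * |c n0|) := by
              rw [Real.log_mul (Real.exp_ne_zero _) (ne_of_gt hcn0), Real.log_exp]
          _ ≤ Real.log ‖v t‖ := Real.log_le_log (by positivity) hlb
      have ht' : t ≠ 0 := ne_of_gt ht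
      calc h t = (1 / t) * (-lam n0 * t + K t + Real.log |c n0|) := by
            rw [hhdef]; field_simp
        _ ≤ (1 / t) * Real.log ‖v t‖ :=
            mul_le_mul_of_nonneg_left hlog (by positivity)
    have hcobdd : IsCoboundedUnder (· ≤ ·) atTop
        (fun t : ℝ => (1 / t) * Real.log ‖v t‖) := by
      refine isCoboundedUnder_le_of_eventually_le atTop (x := -lam n0 + A + 0 - 1) ?_
      filter_upwards [hlow, hhT.eventually_const_lt (show -lam n0 + A + 0 - 1 < -lam n0 + A + 0 by linarith)]
        with t h1 h2 using (le_of_lt h2).trans h1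
    have h1 : limsup (fun t : ℝ => (1 / t) * Real.log ‖v t‖) atTop ≤ limsup g atTop :=
      limsup_le_limsup hle2 hcobdd hgb
    have h2 : limsup g atTop = -lam 0 + A + 0 := hg.limsup_eq
    rw [h2] at h1
    linarith
  · intro hpos
    refine ⟨(lam 0 - A) / 2, by linarith, Cc, ?_⟩
    have hev : ∀ᶠ t in atTop, (1 / t) * K t < A + (lam 0 - A) / 2 :=
      hK.eventually_lt_const (by linarith)
    filter_upwards [hev, eventually_gt_atTop (0:ℝ)] with t hKt ht
    obtain ⟨⟨-, hb'⟩, -⟩ := hb t ht.le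
    have hKt' : K t ≤ (A + (lam 0 - A) / 2) * t := by
      have h1 : t * ((1 / t) * K t) < t * (A + (lam 0 - A) / 2) :=
        mul_lt_mul_of_pos_left hKt ht
      have h2 : t * ((1 / t) * K t) = K t := by field_simp
      nlinarith
    refine le_trans hb' ?_
    rw [mul_comm Cc _]
    refine mul_le_mul_of_nonneg_right ?_ hCc.le
    apply Real.exp_le_exp.2
    nlinarith
end

section
/- Suppose c ≠ 0 and let n₀ be the smallest index n with c_n ≠ 0. Let M : [0,∞) → ℝ satisfy M(t)/t → 0 as t → ∞. Define u(t) = Σ_{n≥1} exp(−λ_n t + ∫_0^t [α(r(s)) − (1/2)β(r(s))²] ds + M(t)) c_n e_n for t ≥ 0. Then lim_{t→∞} (1/t) log ‖u(t)‖ = −(λ_{n₀} − Σ_{j=1}^N π_j (α_j − (1/2)β_j²)). In particular, ‖u(t)‖ converges exponentially to zero if and only if λ_{n₀} > Σ_{j=1}^N π_j (α_j − (1/2)β_j²). -/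
open Filter MeasureTheory Real
open scoped ENNReal Topology

/-!
Every coefficient of `u(t)` carries the common factor `exp D(t)`, where
`D(t) = ∫₀ᵗ (α - β²/2)(r s) ds + M(t)`, and the modes below `n₀` vanish. Since `λ` is
nondecreasing, Parseval squeezes `‖u(t)‖` between `|c_{n₀}| e^{-λ_{n₀} t + D(t)}` and
`‖c‖ e^{-λ_{n₀} t + D(t)}`, so `log ‖u(t)‖ / t` has the limit of `-λ_{n₀} + D(t) / t`.
Splitting the time integral along the states of `r` turns `D(t) / t` into the occupation
averages weighted by `α_j - β_j²/2`, plus `M(t) / t → 0`. Exponential decay is then equivalent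
to the negativity of this exponent.
-/

namespace HilbertBasis

variable {ι H : Type*} [NormedAddCommGroup H] [InnerProductSpace ℝ H] (b : HilbertBasis ι ℝ H)

theorem norm_tsum_smul_sq_s5 {a : ι → ℝ} (ha : Summable fun i => a i ^ 2) :
    ‖∑' i, a i • b i‖ ^ 2 = ∑' i, a i ^ 2 := by
  have h2 : (2 : ℝ≥0∞).toReal = ((2 : ℕ) : ℝ) := by norm_num
  have hmem : Memℓp a 2 := memℓp_gen <| by
    simpa only [h2, Real.rpow_natCast, Real.norm_eq_abs, sq_abs] using ha
  let v : lp (fun _ : ι => ℝ) 2 := ⟨a, hmem⟩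
  rw [(b.hasSum_repr_symm v).tsum_eq, LinearIsometryEquiv.norm_map]
  have hv := lp.norm_rpow_eq_tsum (p := 2) (by simp) v
  simp only [h2, Real.rpow_natCast, Real.norm_eq_abs, sq_abs] at hv
  exact hv

theorem abs_le_norm_tsum_smul {a : ι → ℝ} (ha : Summable fun i => a i ^ 2) (i : ι) :
    |a i| ≤ ‖∑' i, a i • b i‖ := by
  have h : a i ^ 2 ≤ ‖∑' i, a i • b i‖ ^ 2 := by
    rw [b.norm_tsum_smul_sq_s5 ha]
    exact ha.le_tsum i fun j _ => sq_nonneg (a j)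
  simpa only [abs_norm] using sq_le_sq.mp h

theorem norm_tsum_smul_le_of_abs_le {a w : ι → ℝ} (hw : Summable fun i => w i ^ 2)
    (h : ∀ i, |a i| ≤ |w i|) : ‖∑' i, a i • b i‖ ≤ ‖∑' i, w i • b i‖ := by
  have hsq : ∀ i, a i ^ 2 ≤ w i ^ 2 := fun i => sq_le_sq.mpr (h i)
  have ha : Summable fun i => a i ^ 2 := hw.of_nonneg_of_le (fun i => sq_nonneg _) hsq
  rw [← sq_le_sq₀ (norm_nonneg _) (norm_nonneg _), b.norm_tsum_smul_sq_s5 ha,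
    b.norm_tsum_smul_sq_s5 hw]
  exact ha.tsum_le_tsum hsq hw

end HilbertBasis

theorem tendsto_integral_comp_div_of_occupation {ι : Type*} [Fintype ι] [DecidableEq ι]
    [MeasurableSpace ι] [MeasurableSingletonClass ι] {r : ℝ → ι} (hr : Measurable r)
    {p : ι → ℝ}
    (hocc : ∀ i, Tendsto (fun t => (∫ s in (0 : ℝ)..t, if r s = i then (1 : ℝ) else 0) / t)
      atTop (𝓝 (p i)))
    (g : ι → ℝ) :
    Tendsto (fun t => (∫ s in (0 : ℝ)..t, g (r s)) / t) atTop (𝓝 (∑ i, p i * g i)) := by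
  have hind : ∀ i t,
      IntervalIntegrable (fun s => if r s = i then (1 : ℝ) else 0) volume 0 t := by
    intro i t
    have hm : Measurable fun s => if r s = i then (1 : ℝ) else 0 :=
      Measurable.ite (hr (measurableSet_singleton i)) measurable_const measurable_const
    refine (intervalIntegrable_const (c := (1 : ℝ))).mono_fun hm.aestronglyMeasurable ?_
    filter_upwards with s
    split_ifs <;> simp
  have hsplit : ∀ t, ∫ s in (0 : ℝ)..t, g (r s) =
      ∑ i, (∫ s in (0 : ℝ)..t, if r s = i then (1 : ℝ) else 0) * g i := by
    intro t
    calc ∫ s in (0 : ℝ)..t, g (r s)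
        = ∫ s in (0 : ℝ)..t, ∑ i, (if r s = i then (1 : ℝ) else 0) * g i := by
          simp only [ite_mul, one_mul, zero_mul, Finset.sum_ite_eq, Finset.mem_univ, if_true]
      _ = ∑ i, ∫ s in (0 : ℝ)..t, (if r s = i then (1 : ℝ) else 0) * g i :=
          intervalIntegral.integral_finsetSum fun i _ => (hind i t).mul_const (g i)
      _ = _ := by simp only [intervalIntegral.integral_mul_const]
  refine (tendsto_finsetSum _ fun i _ => (hocc i).mul_const (g i)).congr fun t => ?_
  rw [hsplit, Finset.sum_div]
  exact Finset.sum_congr rfl fun i _ => by ring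

theorem abs_exp_mul_le_leading_mode {lam c : ℕ → ℝ} (hlam : Monotone lam) {n₀ : ℕ}
    (hn₀min : ∀ m, m < n₀ → c m = 0) {t : ℝ} (ht : 0 ≤ t) (d : ℝ) (n : ℕ) :
    |exp (-lam n * t + d) * c n| ≤ |exp (-lam n₀ * t + d) * c n| := by
  rcases lt_or_ge n n₀ with hn | hn
  · simp [hn₀min n hn]
  · rw [abs_mul, abs_mul, abs_of_pos (exp_pos _), abs_of_pos (exp_pos _)]
    gcongr
    nlinarith [hlam hn]

theorem tendsto_log_div_of_exp_bounds {f g : ℝ → ℝ} {A B L : ℝ} (hA : 0 < A) (hB : 0 < B)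
    (hlow : ∀ᶠ t in atTop, A * exp (g t) ≤ f t)
    (hup : ∀ᶠ t in atTop, f t ≤ B * exp (g t))
    (hg : Tendsto (fun t => g t / t) atTop (𝓝 L)) :
    Tendsto (fun t => log (f t) / t) atTop (𝓝 L) := by
  have hlim : ∀ C, Tendsto (fun t => (log C + g t) / t) atTop (𝓝 L) := by
    intro C
    have h := (tendsto_inv_atTop_zero.mul_const (log C)).add hg
    rw [zero_mul, zero_add] at h
    exact h.congr fun t => by ring
  have hfpos : ∀ᶠ t in atTop, 0 < f t :=
    hlow.mono fun t ht => (mul_pos hA (exp_pos _)).trans_le ht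
  have hlog : ∀ {C t}, 0 < C → log (C * exp (g t)) = log C + g t := fun hC => by
    rw [log_mul hC.ne' (exp_ne_zero _), log_exp]
  refine tendsto_of_tendsto_of_tendsto_of_le_of_le' (hlim A) (hlim B) ?_ ?_
  · filter_upwards [hlow, eventually_gt_atTop 0] with t hft ht
    rw [← hlog hA]
    gcongr
  · filter_upwards [hup, hfpos, eventually_gt_atTop 0] with t hft hfpos ht
    rw [← hlog hB]
    gcongr

theorem neg_le_of_le_exp_decay {f : ℝ → ℝ} {L γ C : ℝ} (hf : ∀ᶠ t in atTop, 0 < f t)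
    (hL : Tendsto (fun t => log (f t) / t) atTop (𝓝 L))
    (hdecay : ∀ᶠ t in atTop, f t ≤ C * exp (-γ * t)) : L ≤ -γ := by
  have hlim : Tendsto (fun t => log C / t + -γ) atTop (𝓝 (-γ)) := by
    simpa using (tendsto_const_nhds.div_atTop tendsto_id).add_const (-γ)
  refine le_of_tendsto_of_tendsto hL hlim ?_
  filter_upwards [hf, hdecay, eventually_gt_atTop 0] with t hft hdec ht
  have hC : 0 < C := pos_of_mul_pos_left (hft.trans_le hdec) (exp_pos _).le
  calc log (f t) / t ≤ log (C * exp (-γ * t)) / t := by gcongr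
    _ = log C / t + -γ := by
      rw [log_mul hC.ne' (exp_ne_zero _), log_exp]
      field_simp

theorem eventually_le_exp_of_tendsto_log_div {f : ℝ → ℝ} {L : ℝ}
    (hf : ∀ᶠ t in atTop, 0 < f t)
    (hL : Tendsto (fun t => log (f t) / t) atTop (𝓝 L)) {γ : ℝ} (hγ : γ < -L) :
    ∀ᶠ t in atTop, f t ≤ exp (-γ * t) := by
  filter_upwards [hf, hL.eventually (gt_mem_nhds (show L < -γ by linarith)),
    eventually_gt_atTop 0] with t hft hlt ht
  rw [← exp_log hft]
  gcongr
  exact ((div_lt_iff₀ ht).mp hlt).le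

theorem exists_exp_decay_iff_of_tendsto_log_div {f : ℝ → ℝ} {L : ℝ}
    (hf : ∀ᶠ t in atTop, 0 < f t)
    (hL : Tendsto (fun t => log (f t) / t) atTop (𝓝 L)) :
    (∃ γ > (0 : ℝ), ∃ C : ℝ, ∀ᶠ t in atTop, f t ≤ C * exp (-γ * t)) ↔ L < 0 := by
  constructor
  · rintro ⟨γ, hγ, C, hdecay⟩
    linarith [neg_le_of_le_exp_decay hf hL hdecay]
  · intro hL0
    refine ⟨-L / 2, by linarith, 1, ?_⟩
    simpa only [one_mul] using eventually_le_exp_of_tendsto_log_div hf hL (by linarith)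

theorem norm_tsum_exp_mul_smul_bounds {H : Type*}
    [NormedAddCommGroup H] [InnerProductSpace ℝ H]
    (b : HilbertBasis ℕ ℝ H) {lam c : ℕ → ℝ} (hlam : Monotone lam)
    (hc : Summable fun n => c n ^ 2) {n₀ : ℕ} (hn₀min : ∀ m, m < n₀ → c m = 0)
    {t : ℝ} (ht : 0 ≤ t) (d : ℝ) :
    |c n₀| * exp (-lam n₀ * t + d) ≤ ‖∑' n, (exp (-lam n * t + d) * c n) • b n‖ ∧
      ‖∑' n, (exp (-lam n * t + d) * c n) • b n‖ ≤
        ‖∑' n, c n • b n‖ * exp (-lam n₀ * t + d) := by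
  set e := exp (-lam n₀ * t + d)
  have hdom := abs_exp_mul_le_leading_mode hlam hn₀min ht d
  have hw : Summable fun n => (e * c n) ^ 2 := by
    simpa only [mul_pow] using hc.mul_left (e ^ 2)
  have ha : Summable fun n => (exp (-lam n * t + d) * c n) ^ 2 :=
    hw.of_nonneg_of_le (fun n => sq_nonneg _) fun n => sq_le_sq.mpr (hdom n)
  constructor
  · have h := b.abs_le_norm_tsum_smul ha n₀
    rwa [abs_mul, abs_of_pos (exp_pos _), mul_comm] at h
  · calc ‖∑' n, (exp (-lam n * t + d) * c n) • b n‖ ≤ ‖∑' n, (e * c n) • b n‖ :=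
          b.norm_tsum_smul_le_of_abs_le hw hdom
      _ = ‖∑' n, c n • b n‖ * e := by
          simp only [mul_smul, tsum_const_smul'']
          rw [norm_smul, norm_of_nonneg (exp_pos _).le, mul_comm]

theorem sample_lyapunov_exponent_hybrid_general
    {H : Type*} [NormedAddCommGroup H] [InnerProductSpace ℝ H]
    (b : HilbertBasis ℕ ℝ H)
    (lam : ℕ → ℝ) (hlam : Monotone lam)
    (c : ℕ → ℝ) (hc : Summable (fun n => c n ^ 2))
    (n₀ : ℕ) (hn₀ : c n₀ ≠ 0) (hn₀min : ∀ m, m < n₀ → c m = 0)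
    {N : ℕ} (r : ℝ → Fin N) (hr : Measurable r)
    (α β : Fin N → ℝ)
    (pp : Fin N → ℝ)
    (hocc : ∀ i, Tendsto
      (fun t : ℝ => (1 / t) * ∫ s in (0:ℝ)..t, (if r s = i then (1:ℝ) else 0))
      atTop (nhds (pp i)))
    (M : ℝ → ℝ) (hM : Tendsto (fun t : ℝ => M t / t) atTop (nhds 0))
    (u : ℝ → H)
    (hu : ∀ t : ℝ, u t =
      ∑' n : ℕ, (Real.exp (-lam n * t +
        (∫ s in (0:ℝ)..t, (α (r s) - (1 / 2) * β (r s) ^ 2)) + M t) * c n) • (b n : H)) :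
    Tendsto (fun t : ℝ => (1 / t) * Real.log ‖u t‖) atTop
        (nhds (-(lam n₀ - ∑ j, pp j * (α j - (1 / 2) * β j ^ 2)))) ∧
    ((∃ γ > (0:ℝ), ∃ C : ℝ, ∀ᶠ t in atTop, ‖u t‖ ≤ C * Real.exp (-γ * t)) ↔
      ∑ j, pp j * (α j - (1 / 2) * β j ^ 2) < lam n₀) := by
  set K := ∑ j, pp j * (α j - (1 / 2) * β j ^ 2)
  set D : ℝ → ℝ := fun t => (∫ s in (0:ℝ)..t, (α (r s) - (1 / 2) * β (r s) ^ 2)) + M t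
  have hu' : ∀ t, u t = ∑' n, (exp (-lam n * t + D t) * c n) • b n := fun t => by
    simp only [hu, D, add_assoc]
  have hD : Tendsto (fun t => D t / t) atTop (𝓝 K) := by
    have hocc' := fun i => (hocc i).congr fun t => one_div_mul_eq_div t _
    have h := (tendsto_integral_comp_div_of_occupation hr hocc'
      fun i => α i - 1 / 2 * β i ^ 2).add hM
    rw [add_zero] at h
    exact h.congr fun t => (add_div _ _ t).symm
  have hg : Tendsto (fun t => (-lam n₀ * t + D t) / t) atTop (𝓝 (-(lam n₀ - K))) := by
    rw [neg_sub', sub_neg_eq_add]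
    refine (tendsto_const_nhds.add hD).congr' ?_
    filter_upwards [eventually_gt_atTop 0] with t ht
    field_simp
  have hcn₀ : 0 < |c n₀| := abs_pos.mpr hn₀
  have hlow : ∀ᶠ t in atTop, |c n₀| * exp (-lam n₀ * t + D t) ≤ ‖u t‖ := by
    filter_upwards [eventually_ge_atTop 0] with t ht
    exact hu' t ▸ (norm_tsum_exp_mul_smul_bounds b hlam hc hn₀min ht (D t)).1
  have hup :
      ∀ᶠ t in atTop, ‖u t‖ ≤ ‖∑' n, c n • b n‖ * exp (-lam n₀ * t + D t) := by
    filter_upwards [eventually_ge_atTop 0] with t ht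
    exact hu' t ▸ (norm_tsum_exp_mul_smul_bounds b hlam hc hn₀min ht (D t)).2
  have hlog : Tendsto (fun t => log ‖u t‖ / t) atTop (𝓝 (-(lam n₀ - K))) :=
    tendsto_log_div_of_exp_bounds hcn₀ (hcn₀.trans_le (b.abs_le_norm_tsum_smul hc n₀))
      hlow hup hg
  have hpos : ∀ᶠ t in atTop, 0 < ‖u t‖ :=
    hlow.mono fun t ht => (mul_pos hcn₀ (exp_pos _)).trans_le ht
  refine ⟨hlog.congr fun t => (one_div_mul_eq_div t _).symm, ?_⟩
  rw [exists_exp_decay_iff_of_tendsto_log_div hpos hlog, neg_lt_zero, sub_pos]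

/-- sample Lyapunov exponent for the hybrid stochastic heat equation:
for `u(t) = Σ_n exp(−λ_n t + ∫_0^t [α(r(s)) − β(r(s))²/2] ds + M(t)) c_n e_n` with
`M(t)/t → 0`, one has `(1/t) log ‖u(t)‖ → −(λ_{n₀} − Σ_j π_j (α_j − β_j²/2))`, and `‖u(t)‖`
converges exponentially to zero iff `λ_{n₀} > Σ_j π_j (α_j − β_j²/2)`. -/
theorem sample_lyapunov_exponent_hybrid
    {H : Type*} [NormedAddCommGroup H] [InnerProductSpace ℝ H] [CompleteSpace H]
    (b : HilbertBasis ℕ ℝ H)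
    (lam : ℕ → ℝ) (hlam : Monotone lam)
    (c : ℕ → ℝ) (hc : Summable (fun n => c n ^ 2)) (hc0 : c ≠ 0)
    (n₀ : ℕ) (hn₀ : c n₀ ≠ 0) (hn₀min : ∀ m, m < n₀ → c m = 0)
    {N : ℕ} (r : ℝ → Fin N) (hr : Measurable r)
    (α β : Fin N → ℝ)
    (pp : Fin N → ℝ) (hpp : ∀ i, 0 ≤ pp i) (hppsum : ∑ i, pp i = 1)
    (hocc : ∀ i, Tendsto
      (fun t : ℝ => (1 / t) * ∫ s in (0:ℝ)..t, (if r s = i then (1:ℝ) else 0))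
      atTop (nhds (pp i)))
    (M : ℝ → ℝ) (hM : Tendsto (fun t : ℝ => M t / t) atTop (nhds 0))
    (u : ℝ → H)
    (hu : ∀ t : ℝ, u t =
      ∑' n : ℕ, (Real.exp (-lam n * t +
        (∫ s in (0:ℝ)..t, (α (r s) - (1 / 2) * β (r s) ^ 2)) + M t) * c n) • (b n : H)) :
    Tendsto (fun t : ℝ => (1 / t) * Real.log ‖u t‖) atTop
        (nhds (-(lam n₀ - ∑ j, pp j * (α j - (1 / 2) * β j ^ 2)))) ∧
    ((∃ γ > (0:ℝ), ∃ C : ℝ, ∀ᶠ t in atTop, ‖u t‖ ≤ C * Real.exp (-γ * t)) ↔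
      ∑ j, pp j * (α j - (1 / 2) * β j ^ 2) < lam n₀) :=
  sample_lyapunov_exponent_hybrid_general b lam hlam c hc n₀ hn₀ hn₀min r hr α β pp hocc M hM u hu
end

section
/- Suppose c ≠ 0 and let n₀ be the smallest index n with c_n ≠ 0. Let M : [0,∞) → ℝ satisfy M(t)/t → 0 as t → ∞. Define u(t) = Σ_{n≥1} exp(−λ_n t + ∫_0^t [α(r(s)) − (1/2) Σ_{j=1}^m β_j(r(s))²] ds + M(t)) c_n e_n for t ≥ 0. Then lim_{t→∞} (1/t) log ‖u(t)‖ = −(λ_{n₀} − Σ_{i=1}^N π_i (α_i − (1/2) Σ_{j=1}^m β_{ij}²)). In particular, ‖u(t)‖ converges exponentially to zero if and only if λ_{n₀} > Σ_{i=1}^N π_i (α_i − (1/2) Σ_{j=1}^m β_{ij}²). -/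
open Filter MeasureTheory
open scoped BigOperators

/-!
Write `P t = ∫₀ᵗ (α − ½ Σⱼ βⱼ²)(r s) ds + M t`. The coordinates of `u t` in the Hilbert basis are
`e^{P t − λₙ t} cₙ`, so by Parseval, since `λ` is nondecreasing and `c` vanishes below `n₀`,
`|c n₀| e^{P t − λ_{n₀} t} ≤ ‖u t‖ ≤ ‖c‖ e^{P t − λ_{n₀} t}` for `t ≥ 0`. Splitting the integrand
over the finitely many states, the occupation limits give `P t / t → Σᵢ πᵢ (αᵢ − ½ Σⱼ βᵢⱼ²)`,
hence the Lyapunov exponent; exponential decay is equivalent to that exponent being negative.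
-/

theorem abs_le_sqrt_tsum_sq {ι : Type*} {x : ι → ℝ} (hx : Summable fun i => x i ^ 2) (k : ι) :
    |x k| ≤ √(∑' i, x i ^ 2) :=
  Real.abs_le_sqrt (hx.le_tsum k fun i _ => sq_nonneg (x i))

theorem HilbertBasis.norm_tsum_smul {ι 𝕜 E : Type*} [RCLike 𝕜] [NormedAddCommGroup E]
    [InnerProductSpace 𝕜 E] (b : HilbertBasis ι 𝕜 E) {a : ι → 𝕜}
    (ha : Summable fun i => ‖a i‖ ^ 2) :
    ‖∑' i, a i • b i‖ = √(∑' i, ‖a i‖ ^ 2) := by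
  have hmem : Memℓp a 2 := memℓp_gen (by simpa using ha)
  have hsum : HasSum (fun i => a i • b i) (b.repr.symm ⟨a, hmem⟩) :=
    b.hasSum_repr_symm ⟨a, hmem⟩
  rw [hsum.tsum_eq, LinearIsometryEquiv.norm_map, lp.norm_eq_tsum_rpow (by norm_num),
    Real.sqrt_eq_rpow]
  simp

theorem HilbertBasis.norm_tsum_real_smul {ι E : Type*} [NormedAddCommGroup E]
    [InnerProductSpace ℝ E] (b : HilbertBasis ι ℝ E) {a : ι → ℝ}
    (ha : Summable fun i => a i ^ 2) :
    ‖∑' i, a i • b i‖ = √(∑' i, a i ^ 2) := by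
  simp only [← sq_abs (a _), ← Real.norm_eq_abs] at ha ⊢
  exact b.norm_tsum_smul ha

section DominantMode

variable {E : Type*} [NormedAddCommGroup E] [InnerProductSpace ℝ E] {w c : ℕ → ℝ}

theorem summable_sq_mul_of_antitone (hw : Antitone w) (hw0 : ∀ n, 0 ≤ w n)
    (hc : Summable fun n => c n ^ 2) : Summable fun n => (w n * c n) ^ 2 := by
  refine (hc.mul_left (w 0 ^ 2)).of_nonneg_of_le (fun n => sq_nonneg _) fun n => ?_
  rw [mul_pow]
  gcongr
  exacts [hw0 n, hw (Nat.zero_le n)]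

theorem HilbertBasis.abs_mul_le_norm_tsum_mul_smul (b : HilbertBasis ℕ ℝ E) (hw : Antitone w)
    (hw0 : ∀ n, 0 ≤ w n) (hc : Summable fun n => c n ^ 2) (k : ℕ) :
    |w k * c k| ≤ ‖∑' n, (w n * c n) • b n‖ := by
  have hs := summable_sq_mul_of_antitone hw hw0 hc
  rw [b.norm_tsum_real_smul hs]
  exact abs_le_sqrt_tsum_sq hs k

theorem HilbertBasis.norm_tsum_mul_smul_le (b : HilbertBasis ℕ ℝ E) (hw : Antitone w)
    (hw0 : ∀ n, 0 ≤ w n) (hc : Summable fun n => c n ^ 2) {n₀ : ℕ}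
    (hc_lt : ∀ k, k < n₀ → c k = 0) :
    ‖∑' n, (w n * c n) • b n‖ ≤ w n₀ * √(∑' n, c n ^ 2) := by
  have hs := summable_sq_mul_of_antitone hw hw0 hc
  have hle : ∑' n, (w n * c n) ^ 2 ≤ w n₀ ^ 2 * ∑' n, c n ^ 2 := by
    rw [← tsum_mul_left]
    refine hs.tsum_le_tsum (fun n => ?_) (hc.mul_left _)
    rcases lt_or_ge n n₀ with hn | hn
    · simp [hc_lt n hn]
    · rw [mul_pow]
      gcongr
      exacts [hw0 n, hw hn]
  calc ‖∑' n, (w n * c n) • b n‖ = √(∑' n, (w n * c n) ^ 2) := b.norm_tsum_real_smul hs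
    _ ≤ √(w n₀ ^ 2 * ∑' n, c n ^ 2) := Real.sqrt_le_sqrt hle
    _ = w n₀ * √(∑' n, c n ^ 2) := by rw [Real.sqrt_mul (sq_nonneg _), Real.sqrt_sq (hw0 n₀)]

end DominantMode

theorem antitone_exp_neg_mul_add {lam : ℕ → ℝ} (hlam : Monotone lam) {t : ℝ} (ht : 0 ≤ t)
    (p : ℝ) : Antitone fun n => Real.exp (-lam n * t + p) :=
  fun _ _ hnm => Real.exp_le_exp.2 (by nlinarith [hlam hnm])

section Occupation

variable {ι : Type*} [Fintype ι] [DecidableEq ι] [MeasurableSpace ι] [MeasurableSingletonClass ι]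
  {r : ℝ → ι}

theorem intervalIntegral_comp_eq_sum_mul (hr : Measurable r) (f : ι → ℝ) (a b : ℝ) :
    ∫ s in a..b, f (r s) = ∑ i, f i * ∫ s in a..b, (if r s = i then (1:ℝ) else 0) := by
  have hind : ∀ i, IntervalIntegrable (fun s => if r s = i then (1:ℝ) else 0) volume a b :=
    fun i => (intervalIntegrable_const (c := (1:ℝ))).mono_fun'
      ((measurable_const.ite (hr (measurableSet_singleton i)) measurable_const).aestronglyMeasurable)
      (Eventually.of_forall fun s => by dsimp only; split_ifs <;> simp)
  calc ∫ s in a..b, f (r s)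
      = ∫ s in a..b, ∑ i, f i * (if r s = i then (1:ℝ) else 0) := by simp
    _ = ∑ i, f i * ∫ s in a..b, (if r s = i then (1:ℝ) else 0) := by
      rw [intervalIntegral.integral_finsetSum fun i _ => (hind i).const_mul (f i)]
      simp only [intervalIntegral.integral_const_mul]

theorem tendsto_average_comp_of_occupation (hr : Measurable r) {p : ι → ℝ}
    (hocc : ∀ i, Tendsto (fun t : ℝ => (1 / t) * ∫ s in (0:ℝ)..t, (if r s = i then (1:ℝ) else 0))
      atTop (nhds (p i))) (f : ι → ℝ) :
    Tendsto (fun t : ℝ => (1 / t) * ∫ s in (0:ℝ)..t, f (r s)) atTop (nhds (∑ i, p i * f i)) := by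
  simp_rw [intervalIntegral_comp_eq_sum_mul hr, Finset.mul_sum, mul_left_comm _ (f _),
    mul_comm (p _)]
  exact tendsto_finsetSum _ fun i _ => (hocc i).const_mul (f i)

end Occupation

theorem tendsto_one_div_mul_const (a : ℝ) :
    Tendsto (fun t : ℝ => (1 / t) * a) atTop (nhds 0) := by
  simpa [one_div] using tendsto_inv_atTop_zero.mul_const a

theorem tendsto_one_div_mul_mul_self (s : ℝ) :
    Tendsto (fun t : ℝ => (1 / t) * (s * t)) atTop (nhds s) := by
  refine tendsto_const_nhds.congr' ?_
  filter_upwards [eventually_gt_atTop 0] with t ht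
  field_simp

theorem Filter.Tendsto.one_div_mul_const_add {φ : ℝ → ℝ} {L : ℝ}
    (hφ : Tendsto (fun t => (1 / t) * φ t) atTop (nhds L)) (a : ℝ) :
    Tendsto (fun t => (1 / t) * (a + φ t)) atTop (nhds L) := by
  simpa only [mul_add, zero_add] using (tendsto_one_div_mul_const a).add hφ

theorem tendsto_one_div_mul_log_of_le_of_le {g φ : ℝ → ℝ} {A B L : ℝ} (hA : 0 < A)
    (hφ : Tendsto (fun t => (1 / t) * φ t) atTop (nhds L))
    (hlow : ∀ᶠ t in atTop, A * Real.exp (φ t) ≤ g t)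
    (hupp : ∀ᶠ t in atTop, g t ≤ B * Real.exp (φ t)) :
    Tendsto (fun t => (1 / t) * Real.log (g t)) atTop (nhds L) := by
  refine tendsto_of_tendsto_of_tendsto_of_le_of_le' (hφ.one_div_mul_const_add (Real.log A))
    (hφ.one_div_mul_const_add (Real.log B)) ?_ ?_
  all_goals filter_upwards [hlow, hupp, eventually_gt_atTop 0] with t hlo hup ht
  all_goals have hAe : 0 < A * Real.exp (φ t) := by positivity
  · have := Real.log_le_log hAe hlo
    rw [Real.log_mul hA.ne' (Real.exp_pos _).ne', Real.log_exp] at this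
    gcongr
  · have hB : 0 < B := pos_of_mul_pos_left (hAe.trans_le (hlo.trans hup)) (Real.exp_pos _).le
    have := Real.log_le_log (hAe.trans_le hlo) hup
    rw [Real.log_mul hB.ne' (Real.exp_pos _).ne', Real.log_exp] at this
    gcongr

theorem exists_exp_decay_iff_of_tendsto {g : ℝ → ℝ} {L : ℝ} (hpos : ∀ᶠ t in atTop, 0 < g t)
    (hg : Tendsto (fun t => (1 / t) * Real.log (g t)) atTop (nhds L)) :
    (∃ γ > (0:ℝ), ∃ C : ℝ, ∀ᶠ t in atTop, g t ≤ C * Real.exp (-γ * t)) ↔ L < 0 := by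
  constructor
  · rintro ⟨γ, hγ, C, hC⟩
    obtain ⟨t₀, hgt₀, hCt₀⟩ := (hpos.and hC).exists
    have hC0 : 0 < C := pos_of_mul_pos_left (hgt₀.trans_le hCt₀) (Real.exp_pos _).le
    have hlim := (tendsto_one_div_mul_mul_self (-γ)).one_div_mul_const_add (Real.log C)
    have : L ≤ -γ := le_of_tendsto_of_tendsto hg hlim <| by
      filter_upwards [hpos, hC, eventually_gt_atTop 0] with t hgt hCt ht
      have := Real.log_le_log hgt hCt
      rw [Real.log_mul hC0.ne' (Real.exp_pos _).ne', Real.log_exp] at this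
      gcongr
    linarith
  · intro hL
    refine ⟨-L / 2, by linarith, 1, ?_⟩
    filter_upwards [hpos, hg.eventually_lt_const (by linarith : L < L / 2),
      eventually_gt_atTop 0] with t hgt hlt ht
    have hlog : Real.log (g t) < L / 2 * t := by
      rwa [one_div, inv_mul_lt_iff₀ ht, mul_comm] at hlt
    rw [one_mul, ← Real.exp_log hgt]
    exact Real.exp_le_exp.2 (by linarith)

theorem sample_lyapunov_exponent_hybrid_multinoise_general
    {H : Type*} [NormedAddCommGroup H] [InnerProductSpace ℝ H] [CompleteSpace H]
    (b : HilbertBasis ℕ ℝ H)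
    (lam : ℕ → ℝ) (hlam : Monotone lam)
    (c : ℕ → ℝ) (hc : Summable (fun n => c n ^ 2))
    (n₀ : ℕ) (hn₀ : c n₀ ≠ 0) (hn₀min : ∀ k, k < n₀ → c k = 0)
    {N m : ℕ} (r : ℝ → Fin N) (hr : Measurable r)
    (α : Fin N → ℝ) (β : Fin m → Fin N → ℝ)
    (pp : Fin N → ℝ)
    (hocc : ∀ i, Tendsto
      (fun t : ℝ => (1 / t) * ∫ s in (0:ℝ)..t, (if r s = i then (1:ℝ) else 0))
      atTop (nhds (pp i)))
    (M : ℝ → ℝ) (hM : Tendsto (fun t : ℝ => M t / t) atTop (nhds 0))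
    (u : ℝ → H)
    (hu : ∀ t : ℝ, u t =
      ∑' n : ℕ, (Real.exp (-lam n * t +
        (∫ s in (0:ℝ)..t, (α (r s) - (1 / 2) * ∑ j, β j (r s) ^ 2)) + M t) * c n)
        • (b n : H)) :
    Tendsto (fun t : ℝ => (1 / t) * Real.log ‖u t‖) atTop
        (nhds (-(lam n₀ - ∑ i, pp i * (α i - (1 / 2) * ∑ j, β j i ^ 2)))) ∧
    ((∃ γ > (0:ℝ), ∃ C : ℝ, ∀ᶠ t in atTop, ‖u t‖ ≤ C * Real.exp (-γ * t)) ↔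
      ∑ i, pp i * (α i - (1 / 2) * ∑ j, β j i ^ 2) < lam n₀) := by
  set κ := ∑ i, pp i * (α i - (1 / 2) * ∑ j, β j i ^ 2)
  set P : ℝ → ℝ := fun t => (∫ s in (0:ℝ)..t, (α (r s) - (1 / 2) * ∑ j, β j (r s) ^ 2)) + M t
  have hP : Tendsto (fun t => (1 / t) * P t) atTop (nhds κ) := by
    have hM' : Tendsto (fun t : ℝ => (1 / t) * M t) atTop (nhds 0) := by
      simpa only [one_div_mul_eq_div] using hM
    simpa only [P, mul_add, add_zero] using
      (tendsto_average_comp_of_occupation hr hocc fun i => α i - (1 / 2) * ∑ j, β j i ^ 2).add hM'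
  have hφ : Tendsto (fun t => (1 / t) * (-lam n₀ * t + P t)) atTop (nhds (-(lam n₀ - κ))) := by
    simpa only [mul_add, neg_sub, neg_add_eq_sub] using
      (tendsto_one_div_mul_mul_self (-lam n₀)).add hP
  have hu' : ∀ t, u t = ∑' n, (Real.exp (-lam n * t + P t) * c n) • b n := fun t => by
    simp only [hu t, add_assoc, P]
  have hw0 : ∀ t n, 0 ≤ Real.exp (-lam n * t + P t) := fun _ _ => (Real.exp_pos _).le
  have hlow : ∀ᶠ t in atTop, |c n₀| * Real.exp (-lam n₀ * t + P t) ≤ ‖u t‖ := by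
    filter_upwards [eventually_ge_atTop 0] with t ht
    rw [hu', mul_comm, ← Real.abs_exp, ← abs_mul]
    exact b.abs_mul_le_norm_tsum_mul_smul (antitone_exp_neg_mul_add hlam ht _) (hw0 t) hc n₀
  have hupp : ∀ᶠ t in atTop, ‖u t‖ ≤ √(∑' n, c n ^ 2) * Real.exp (-lam n₀ * t + P t) := by
    filter_upwards [eventually_ge_atTop 0] with t ht
    rw [hu', mul_comm]
    exact b.norm_tsum_mul_smul_le (antitone_exp_neg_mul_add hlam ht _) (hw0 t) hc hn₀min
  have hlim := tendsto_one_div_mul_log_of_le_of_le (abs_pos.2 hn₀) hφ hlow hupp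
  have hpos : ∀ᶠ t in atTop, 0 < ‖u t‖ :=
    hlow.mono fun t h => (mul_pos (abs_pos.2 hn₀) (Real.exp_pos _)).trans_le h
  rw [exists_exp_decay_iff_of_tendsto hpos hlim, neg_lt_zero, sub_pos]
  exact ⟨hlim, Iff.rfl⟩

/-- multi-noise version of the sample Lyapunov exponent: for
`u(t) = Σ_n exp(−λ_n t + ∫_0^t [α(r(s)) − (1/2)Σ_{j=1}^m β_j(r(s))²] ds + M(t)) c_n e_n`
with `M(t)/t → 0`, one has
`(1/t) log ‖u(t)‖ → −(λ_{n₀} − Σ_i π_i (α_i − (1/2)Σ_j β_{ij}²))`, and `‖u(t)‖` converges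
exponentially to zero iff `λ_{n₀} > Σ_i π_i (α_i − (1/2)Σ_j β_{ij}²)`. -/
theorem sample_lyapunov_exponent_hybrid_multinoise
    {H : Type*} [NormedAddCommGroup H] [InnerProductSpace ℝ H] [CompleteSpace H]
    (b : HilbertBasis ℕ ℝ H)
    (lam : ℕ → ℝ) (hlam : Monotone lam)
    (c : ℕ → ℝ) (hc : Summable (fun n => c n ^ 2)) (hc0 : c ≠ 0)
    (n₀ : ℕ) (hn₀ : c n₀ ≠ 0) (hn₀min : ∀ k, k < n₀ → c k = 0)
    {N m : ℕ} (r : ℝ → Fin N) (hr : Measurable r)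
    (α : Fin N → ℝ) (β : Fin m → Fin N → ℝ)
    (pp : Fin N → ℝ) (hpp : ∀ i, 0 ≤ pp i) (hppsum : ∑ i, pp i = 1)
    (hocc : ∀ i, Tendsto
      (fun t : ℝ => (1 / t) * ∫ s in (0:ℝ)..t, (if r s = i then (1:ℝ) else 0))
      atTop (nhds (pp i)))
    (M : ℝ → ℝ) (hM : Tendsto (fun t : ℝ => M t / t) atTop (nhds 0))
    (u : ℝ → H)
    (hu : ∀ t : ℝ, u t =
      ∑' n : ℕ, (Real.exp (-lam n * t +
        (∫ s in (0:ℝ)..t, (α (r s) - (1 / 2) * ∑ j, β j (r s) ^ 2)) + M t) * c n)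
        • (b n : H)) :
    Tendsto (fun t : ℝ => (1 / t) * Real.log ‖u t‖) atTop
        (nhds (-(lam n₀ - ∑ i, pp i * (α i - (1 / 2) * ∑ j, β j i ^ 2)))) ∧
    ((∃ γ > (0:ℝ), ∃ C : ℝ, ∀ᶠ t in atTop, ‖u t‖ ≤ C * Real.exp (-γ * t)) ↔
      ∑ i, pp i * (α i - (1 / 2) * ∑ j, β j i ^ 2) < lam n₀) :=
  sample_lyapunov_exponent_hybrid_multinoise_general b lam hlam c hc n₀ hn₀ hn₀min r hr α β pp hocc
    M hM u hu
end
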